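/- The function f₂(γ) = ((γ+δ)/γ)·(1 − μ/(η + √(η² + 2σ²(δ+γ)))) is decreasing on (0, γ₁), satisfies lim_{γ↓0} f₂(γ) = +∞, and lim_{γ↑γ₁} f₂(γ) = 1, where γ₁ = (δ/μ)·(2δσ²/μ + 2η − μ). -/

import Mathlib

open Real Filter Set Topology

/-- f₂(γ) = ((γ+δ)/γ)(1 − μ/(η + √(η² + 2σ²(δ+γ)))). -/
noncomputable def f2 (σ η δ μ : ℝ) (γ : ℝ) : ℝ :=
  ((γ + δ) / γ) * (1 - μ / (η + Real.sqrt (η ^ 2 + 2 * σ ^ 2 * (δ + γ))))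

/-!
Writing `s γ = √(η² + 2σ²(δ + γ))`, so that `2σ²(γ + δ) = (s γ - η)(s γ + η)`, the function
simplifies to `f₂(γ) = 1 + μ (η + 2σ²δ/μ - s γ) / (2σ²γ)`. At `γ₁` one has `s γ₁ = η + 2σ²δ/μ`,
so rationalising gives `f₂(γ) = 1 + μ (γ₁ - γ) / (γ (s γ₁ + s γ))`: on `(0, γ₁]` this is `1` plus
`μ` times a product of two positive decreasing factors, and it equals `1` at `γ₁`. Near `0` the
factor `(γ + δ)/γ` blows up while `1 - μ/(η + s γ)` stays positive because `μ < 2η ≤ η + s γ`.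
-/

/-- The paper's `γ₁`. -/
noncomputable def f2Threshold (σ η δ μ : ℝ) : ℝ :=
  δ / μ * (2 * δ * σ ^ 2 / μ + 2 * η - μ)

variable {σ η δ μ γ : ℝ}

theorem f2Threshold_pos (hδ : 0 < δ) (hμ : 0 < μ) (hμ2 : μ < 2 * η) :
    0 < f2Threshold σ η δ μ := by
  have : 0 ≤ 2 * δ * σ ^ 2 / μ := by positivity
  exact mul_pos (div_pos hδ hμ) (by linarith)

theorem f2_eq_one_add (hσ : σ ≠ 0) (hη : 0 < η) (hμ : 0 < μ) (hδ : 0 ≤ δ) (hγ : 0 < γ) :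
    f2 σ η δ μ γ = 1 + μ * (f2Threshold σ η δ μ - γ) /
      (γ * (η + 2 * σ ^ 2 * δ / μ + √(η ^ 2 + 2 * σ ^ 2 * (δ + γ)))) := by
  have hs : √(η ^ 2 + 2 * σ ^ 2 * (δ + γ)) ^ 2 = η ^ 2 + 2 * σ ^ 2 * (δ + γ) :=
    sq_sqrt (by positivity)
  have : 0 < η + √(η ^ 2 + 2 * σ ^ 2 * (δ + γ)) := by positivity
  rw [f2, f2Threshold]
  field_simp
  linear_combination δ * μ * hs

theorem f2_antitoneOn (hσ : σ ≠ 0) (hη : 0 < η) (hμ : 0 < μ) (hδ : 0 ≤ δ) :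
    AntitoneOn (f2 σ η δ μ) (Ioc 0 (f2Threshold σ η δ μ)) := by
  rintro a ⟨ha₀, ha₁⟩ b ⟨hb₀, -⟩ hab
  rw [f2_eq_one_add hσ hη hμ hδ ha₀, f2_eq_one_add hσ hη hμ hδ hb₀]
  have : 0 ≤ f2Threshold σ η δ μ - a := sub_nonneg.mpr ha₁
  gcongr

theorem f2_threshold_eq_one (hσ : σ ≠ 0) (hη : 0 < η) (hμ : 0 < μ) (hδ : 0 ≤ δ)
    (hγ₁ : 0 < f2Threshold σ η δ μ) : f2 σ η δ μ (f2Threshold σ η δ μ) = 1 := by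
  rw [f2_eq_one_add hσ hη hμ hδ hγ₁, sub_self, mul_zero, zero_div, add_zero]

theorem continuousAt_f2 (hη : 0 < η) (hγ : γ ≠ 0) : ContinuousAt (f2 σ η δ μ) γ := by
  unfold f2
  fun_prop (disch := first | assumption | positivity)

theorem tendsto_f2_nhdsLT_threshold (hσ : σ ≠ 0) (hη : 0 < η) (hμ : 0 < μ) (hδ : 0 ≤ δ)
    (hγ₁ : 0 < f2Threshold σ η δ μ) :
    Tendsto (f2 σ η δ μ) (𝓝[<] f2Threshold σ η δ μ) (𝓝 1) := by
  have h := (continuousAt_f2 (σ := σ) (δ := δ) (μ := μ) hη hγ₁.ne').tendsto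
  rw [f2_threshold_eq_one hσ hη hμ hδ hγ₁] at h
  exact h.mono_left nhdsWithin_le_nhds

theorem tendsto_f2_nhdsGT_zero (hδ : 0 < δ) (hη : 0 < η) (hμ2 : μ < 2 * η) :
    Tendsto (f2 σ η δ μ) (𝓝[>] 0) atTop := by
  have hblowup : Tendsto (fun γ : ℝ => (γ + δ) / γ) (𝓝[>] 0) atTop := by
    have hnum : Tendsto (fun γ : ℝ => γ + δ) (𝓝[>] 0) (𝓝 δ) := by
      simpa using ((continuous_add_const δ).tendsto 0).mono_left nhdsWithin_le_nhds
    simpa only [div_eq_mul_inv] using hnum.pos_mul_atTop hδ tendsto_inv_nhdsGT_zero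
  have hη_le : η ≤ √(η ^ 2 + 2 * σ ^ 2 * (δ + 0)) :=
    le_sqrt_of_sq_le (le_add_of_nonneg_right (by positivity))
  have hpos : 0 < 1 - μ / (η + √(η ^ 2 + 2 * σ ^ 2 * (δ + 0))) := by
    rw [sub_pos, div_lt_one (by positivity)]
    linarith
  have hcont : ContinuousAt (fun γ => 1 - μ / (η + √(η ^ 2 + 2 * σ ^ 2 * (δ + γ)))) 0 := by
    fun_prop (disch := positivity)
  exact hblowup.atTop_mul_pos hpos (hcont.tendsto.mono_left nhdsWithin_le_nhds)

theorem f2_antitone_and_limits (σ η δ μ : ℝ)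
    (hσ : 0 < σ) (hδ : 0 < δ) (hη : 0 < η) (hημ : η < μ) (hμ2 : μ < 2 * η) :
    AntitoneOn (f2 σ η δ μ) (Set.Ioo 0 (δ / μ * (2 * δ * σ ^ 2 / μ + 2 * η - μ))) ∧
    Tendsto (f2 σ η δ μ) (nhdsWithin 0 (Set.Ioi 0)) atTop ∧
    Tendsto (f2 σ η δ μ)
      (nhdsWithin (δ / μ * (2 * δ * σ ^ 2 / μ + 2 * η - μ))
        (Set.Iio (δ / μ * (2 * δ * σ ^ 2 / μ + 2 * η - μ)))) (nhds 1) := by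
  have hμ : 0 < μ := hη.trans hημ
  exact ⟨(f2_antitoneOn hσ.ne' hη hμ hδ.le).mono Ioo_subset_Ioc_self,
    tendsto_f2_nhdsGT_zero hδ hη hμ2,
    tendsto_f2_nhdsLT_threshold hσ.ne' hη hμ hδ.le (f2Threshold_pos hδ hμ hμ2)⟩
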